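/- arXiv:2309.15420 — 3 statements merged into one kernel-verified Lean document; each statement's English description precedes it below -/
import Mathlib

section
/- Let n, c be positive natural numbers. For each i : Fin n let a_i, b_i, π_i : Fin c → ℝ be probability vectors (nonnegative, summing to 1), with b_i y > 0 for all y, and define the mixture m : Fin c → ℝ by m y = (1/n) * ∑_{j : Fin n} b_j y. Then ∑_i ∑_y a_i y * Real.log (b_i y) + ∑_i ∑_y π_i y * Real.log (m y) ≤ ∑_i ∑_y π_i y * Real.log (π_i y); that is, L_INV + L_PRIOR ≤ -∑_i H(π_i). -/
/-- Gibbs' inequality: cross entropy is at least entropy. -/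
lemma gibbs_aux {c : ℕ} (p q : Fin c → ℝ) (hp : ∀ y, 0 ≤ p y) (hpsum : ∑ y, p y = 1)
    (hq : ∀ y, 0 < q y) (hqsum : ∑ y, q y = 1) :
    ∑ y, p y * Real.log (q y) ≤ ∑ y, p y * Real.log (p y) := by
  have key : ∀ y, p y * Real.log (q y) - p y * Real.log (p y) ≤ q y - p y := by
    intro y
    rcases eq_or_lt_of_le (hp y) with h | h
    · simp [← h, (hq y).le]
    · have hdiv : 0 < q y / p y := div_pos (hq y) h
      have hlog := Real.log_le_sub_one_of_pos hdiv
      have : p y * Real.log (q y / p y) ≤ p y * (q y / p y - 1) :=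
        mul_le_mul_of_nonneg_left hlog (hp y)
      rw [Real.log_div (hq y).ne' h.ne'] at this
      calc p y * Real.log (q y) - p y * Real.log (p y)
          = p y * (Real.log (q y) - Real.log (p y)) := by ring
        _ ≤ p y * (q y / p y - 1) := this
        _ = q y - p y := by field_simp
  have hsum : ∑ y, (p y * Real.log (q y) - p y * Real.log (p y)) ≤ ∑ y, (q y - p y) :=
    Finset.sum_le_sum fun y _ => key y
  simp only [Finset.sum_sub_distrib, hpsum, hqsum] at hsum
  linarith

/-- Eq. (4) of Proposition 1: `L_INV + L_PRIOR ≤ -∑ i H(π i)`, i.e. the sum of the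
invariance and prior terms is bounded by the negative total entropy of the priors. -/
theorem inv_add_prior_le_neg_entropy (n c : ℕ) (hn : 0 < n) (hc : 0 < c)
    (a b π : Fin n → Fin c → ℝ)
    (ha : ∀ i y, 0 ≤ a i y) (hasum : ∀ i, ∑ y, a i y = 1)
    (hb : ∀ i y, 0 < b i y) (hbsum : ∀ i, ∑ y, b i y = 1)
    (hπ : ∀ i y, 0 ≤ π i y) (hπsum : ∀ i, ∑ y, π i y = 1)
    (m : Fin c → ℝ) (hm : ∀ y, m y = (1 / (n : ℝ)) * ∑ j, b j y) :
    ∑ i, ∑ y, a i y * Real.log (b i y) + ∑ i, ∑ y, π i y * Real.log (m y) ≤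
      ∑ i, ∑ y, π i y * Real.log (π i y) := by
  have hn' : (0 : ℝ) < n := Nat.cast_pos.mpr hn
  -- first term nonpositive
  have h1 : ∑ i, ∑ y, a i y * Real.log (b i y) ≤ 0 := by
    apply Finset.sum_nonpos
    intro i _
    apply Finset.sum_nonpos
    intro y _
    have hby : b i y ≤ 1 := by
      rw [← hbsum i]
      exact Finset.single_le_sum (fun z _ => (hb i z).le) (Finset.mem_univ y)
    exact mul_nonpos_of_nonneg_of_nonpos (ha i y) (Real.log_nonpos (hb i y).le hby)
  -- m is a positive probability vector
  have hmpos : ∀ y, 0 < m y := by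
    intro y
    rw [hm y]
    exact mul_pos (by positivity) (Finset.sum_pos (fun j _ => hb j y) ⟨⟨0, hn⟩, Finset.mem_univ _⟩)
  have hmsum : ∑ y, m y = 1 := by
    simp only [hm]
    rw [← Finset.mul_sum, Finset.sum_comm]
    simp only [hbsum]
    simp
    field_simp
  have h2 : ∀ i, ∑ y, π i y * Real.log (m y) ≤ ∑ y, π i y * Real.log (π i y) :=
    fun i => gibbs_aux (π i) m (hπ i) (hπsum i) hmpos hmsum
  calc ∑ i, ∑ y, a i y * Real.log (b i y) + ∑ i, ∑ y, π i y * Real.log (m y)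
      ≤ 0 + ∑ i, ∑ y, π i y * Real.log (π i y) := by
        exact add_le_add h1 (Finset.sum_le_sum fun i _ => h2 i)
    _ = ∑ i, ∑ y, π i y * Real.log (π i y) := by ring
end

section
/- Let c be a positive natural number, t : Fin c → ℝ, and j : Fin c such that t y < t j for all y ≠ j (j is the unique maximizer). For τ > 0 define p_τ y = Real.exp (t y / τ) / ∑_{y'} Real.exp (t y' / τ). Then the Shannon entropy of the tempered softmax tends to 0 as τ → 0 from the right: Tendsto (fun τ => -∑_y p_τ y * Real.log (p_τ y)) (nhdsWithin 0 (Set.Ioi 0)) (nhds 0). -/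
open Filter

private lemma softmax_shift (c : ℕ) (t : Fin c → ℝ) (j : Fin c) (s : ℝ) (y : Fin c) :
    Real.exp (s * t y) / ∑ y', Real.exp (s * t y') =
      Real.exp (s * (t y - t j)) / ∑ y', Real.exp (s * (t y' - t j)) := by
  simp only [mul_sub, Real.exp_sub, ← Finset.sum_div]
  rw [div_div_div_cancel_right₀]
  exact Real.exp_ne_zero _

private lemma softmax_tendsto (c : ℕ) (t : Fin c → ℝ) (j : Fin c)
    (hj : ∀ y, y ≠ j → t y < t j) (y : Fin c) :
    Tendsto (fun s : ℝ => Real.exp (s * t y) / ∑ y', Real.exp (s * t y')) atTop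
      (nhds (if y = j then 1 else 0)) := by
  have hterm : ∀ z : Fin c, Tendsto (fun s : ℝ => Real.exp (s * (t z - t j))) atTop
      (nhds (if z = j then 1 else 0)) := by
    intro z
    by_cases h : z = j
    · simp [h]
    · simp only [if_neg h]
      have hneg : t z - t j < 0 := sub_neg.2 (hj z h)
      have h1 : Tendsto (fun s : ℝ => s * (t z - t j)) atTop atBot := by
        simpa using tendsto_id.atTop_mul_neg hneg (tendsto_const_nhds (x := t z - t j))
      exact Real.tendsto_exp_atBot.comp h1
  have hden : Tendsto (fun s : ℝ => ∑ y', Real.exp (s * (t y' - t j))) atTop (nhds 1) := by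
    have h1 : (1 : ℝ) = ∑ y' : Fin c, (if y' = j then (1:ℝ) else 0) := by simp
    rw [h1]
    exact tendsto_finset_sum _ fun z _ => hterm z
  have h2 := (hterm y).div hden one_ne_zero
  rw [div_one] at h2
  exact h2.congr fun s => (softmax_shift c t j s y).symm

/-- The Shannon entropy of the tempered softmax with a unique maximal logit vanishes in
the low-temperature limit `τ → 0⁺`. -/
theorem tempered_softmax_entropy_tendsto_zero (c : ℕ) (hc : 0 < c) (t : Fin c → ℝ)
    (j : Fin c) (hj : ∀ y, y ≠ j → t y < t j) :
    Tendsto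
      (fun τ : ℝ =>
        -∑ y, (Real.exp (t y / τ) / ∑ y', Real.exp (t y' / τ)) *
            Real.log (Real.exp (t y / τ) / ∑ y', Real.exp (t y' / τ)))
      (nhdsWithin 0 (Set.Ioi 0)) (nhds 0) := by
  have hs : Tendsto
      (fun s : ℝ =>
        -∑ y, (Real.exp (s * t y) / ∑ y', Real.exp (s * t y')) *
            Real.log (Real.exp (s * t y) / ∑ y', Real.exp (s * t y')))
      atTop (nhds 0) := by
    have hsum : Tendsto
        (fun s : ℝ =>
          ∑ y, (Real.exp (s * t y) / ∑ y', Real.exp (s * t y')) *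
              Real.log (Real.exp (s * t y) / ∑ y', Real.exp (s * t y')))
        atTop (nhds 0) := by
      have h0 : (0 : ℝ) = ∑ _y : Fin c, (0 : ℝ) := by simp
      rw [h0]
      refine tendsto_finset_sum _ fun y _ => ?_
      have hq := softmax_tendsto c t j hj y
      have := (Real.continuous_mul_log.continuousAt
        (x := if y = j then (1:ℝ) else 0)).tendsto.comp hq
      have hval : ((if y = j then (1:ℝ) else 0) *
          Real.log (if y = j then (1:ℝ) else 0)) = 0 := by
        by_cases h : y = j <;> simp [h]
      rw [hval] at this
      exact this
    simpa using hsum.neg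
  have hcomp := hs.comp tendsto_inv_nhdsGT_zero
  refine hcomp.congr fun τ => ?_
  have h : ∀ z : Fin c, τ⁻¹ * t z = t z / τ := fun z => inv_mul_eq_div _ _
  simp only [Function.comp, h]
end

section
/- Let X be a nonempty finite type, c a positive natural number, j : Fin c, g : X → ℝ, and r : ℕ → X → Fin c → ℝ a sequence of logit families such that r k x j = g x for all k and x, and for every x and every y ≠ j, the sequence k ↦ r k x y tends to -∞ (Tendsto along atTop to atBot). Then for every x : X, Tendsto (fun k => (∑_y Real.exp (r k x y)) / ∑_{x'} ∑_y Real.exp (r k x' y)) atTop (nhds (Real.exp (g x) / ∑_{x'} Real.exp (g x'))). -/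
open Filter

/-- Under cluster collapse (`r k x y → -∞` for all `y ≠ j`, while `r k x j = g x`), the
marginal energy-based density `(∑ y, exp (r k x y)) / ∑ x', ∑ y, exp (r k x' y)`
converges to the single-cluster energy-based model `exp (g x) / ∑ x', exp (g x')`. -/
theorem marginal_ebm_tendsto_single_cluster (X : Type*) [Fintype X] [Nonempty X]
    (c : ℕ) (hc : 0 < c) (j : Fin c) (g : X → ℝ) (r : ℕ → X → Fin c → ℝ)
    (hrj : ∀ k x, r k x j = g x)
    (h : ∀ x, ∀ y, y ≠ j → Tendsto (fun k => r k x y) atTop atBot) :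
    ∀ x : X,
      Tendsto (fun k => (∑ y, Real.exp (r k x y)) / ∑ x', ∑ y, Real.exp (r k x' y))
        atTop (nhds (Real.exp (g x) / ∑ x', Real.exp (g x'))) := by
  have hnum : ∀ x : X, Tendsto (fun k => ∑ y, Real.exp (r k x y)) atTop
      (nhds (Real.exp (g x))) := by
    intro x
    have : Tendsto (fun k => ∑ y, Real.exp (r k x y)) atTop
        (nhds (∑ y : Fin c, if y = j then Real.exp (g x) else 0)) := by
      apply tendsto_finset_sum
      intro y _
      by_cases hy : y = j
      · subst hy
        simp only [if_pos rfl]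
        simpa [hrj] using tendsto_const_nhds (x := Real.exp (g x)) (f := atTop (α := ℕ))
      · simp only [if_neg hy]
        exact Real.tendsto_exp_atBot.comp (h x y hy)
    simpa using this
  have hden : Tendsto (fun k => ∑ x' : X, ∑ y, Real.exp (r k x' y)) atTop
      (nhds (∑ x' : X, Real.exp (g x'))) :=
    tendsto_finset_sum _ fun x' _ => hnum x'
  have hpos : (∑ x' : X, Real.exp (g x')) ≠ 0 := by
    positivity
  intro x
  exact (hnum x).div hden hpos
end
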